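/- arXiv:2203.00333 — 2 statements merged into one kernel-verified Lean document; each statement's English description precedes it below -/
import Mathlib

section
/- Let E be a finite-dimensional real inner product space, let f : E → ℝ ∪ {+∞} be a proper convex function, and suppose that the closed ball of radius r > 0 centred at x₀ ∈ E is contained in the interior of the effective domain dom(f) = {z ∈ E : f(z) < +∞}. Then there exists a constant c ∈ ℝ such that the Fenchel conjugate satisfies f*(ξ) ≥ ⟨x₀, ξ⟩ + r‖ξ‖ + c for all ξ ∈ E. -/
open Metric
open scoped RealInnerProductSpace

/-- If the closed ball `closedBall x₀ r` (with `r > 0`) is contained in the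
interior of the effective domain of a proper convex function `f : E → ℝ ∪ {+∞}`, then the
Fenchel conjugate satisfies `f*(ξ) ≥ ⟨x₀, ξ⟩ + r‖ξ‖ + c` for some constant `c`. -/
theorem fenchel_conjugate_demicoercive_of_ball_subset_domain
    {E : Type*} [NormedAddCommGroup E] [InnerProductSpace ℝ E] [FiniteDimensional ℝ E]
    (f : E → EReal)
    (hproper_top : ∃ z : E, f z < ⊤)
    (hproper_bot : ∀ z : E, f z ≠ ⊥)
    (hconv : ∀ x y : E, ∀ a b : ℝ, 0 ≤ a → 0 ≤ b → a + b = 1 →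
      f (a • x + b • y) ≤ (a : EReal) * f x + (b : EReal) * f y)
    (x₀ : E) (r : ℝ) (hr : 0 < r)
    (hball : closedBall x₀ r ⊆ interior {z : E | f z < ⊤}) :
    ∃ c : ℝ, ∀ ξ : E,
      ((⟪x₀, ξ⟫ : ℝ) : EReal) + ((r * ‖ξ‖ : ℝ) : EReal) + (c : EReal) ≤
        ⨆ z : E, (((⟪ξ, z⟫ : ℝ) : EReal) - f z) := by
  classical
  set S : Set E := {z : E | f z < ⊤} with hS
  -- S is convex
  have hSconv : Convex ℝ S := by
    intro x hx y hy a b ha hb hab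
    have hfx : f x ≠ ⊤ := hx.ne
    have hfy : f y ≠ ⊤ := hy.ne
    have := hconv x y a b ha hb hab
    refine lt_of_le_of_lt this ?_
    have h1 : (a : EReal) * f x < ⊤ := by
      lift f x to ℝ using ⟨hfx, hproper_bot x⟩ with fx
      rw [← EReal.coe_mul]; exact EReal.coe_lt_top _
    have h2 : (b : EReal) * f y < ⊤ := by
      lift f y to ℝ using ⟨hfy, hproper_bot y⟩ with fy
      rw [← EReal.coe_mul]; exact EReal.coe_lt_top _
    exact EReal.add_lt_top h1.ne h2.ne
  -- real-valued version of f
  set g : E → ℝ := fun z => (f z).toReal with hg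
  have hfg : ∀ z ∈ interior S, f z = ((g z : ℝ) : EReal) := by
    intro z hz
    have hzS : z ∈ S := interior_subset hz
    have hz' : f z < ⊤ := hzS
    simp [hg, EReal.coe_toReal hz'.ne (hproper_bot z)]
  have hginterior : ConvexOn ℝ (interior S) g := by
    refine ⟨hSconv.interior, ?_⟩
    intro x hx y hy a b ha hb hab
    have hmem : a • x + b • y ∈ interior S :=
      hSconv.interior hx hy ha hb hab
    have h := hconv x y a b ha hb hab
    rw [hfg x hx, hfg y hy, hfg _ hmem] at h
    rw [← EReal.coe_mul, ← EReal.coe_mul, ← EReal.coe_add] at h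
    exact_mod_cast h
  have hcont : ContinuousOn g (interior S) :=
    hginterior.continuousOn isOpen_interior
  have hcont' : ContinuousOn g (closedBall x₀ r) := hcont.mono hball
  obtain ⟨zmax, hzmax, hmax⟩ :=
    (isCompact_closedBall x₀ r).exists_isMaxOn (nonempty_closedBall.mpr hr.le) hcont'
  set M : ℝ := g zmax with hM
  refine ⟨-M, fun ξ => ?_⟩
  -- choose the point on the sphere
  by_cases hξ : ξ = 0
  · -- use z = x₀
    have hx₀mem : x₀ ∈ closedBall x₀ r := mem_closedBall_self hr.le
    have key : ((⟪ξ, x₀⟫ : ℝ) : EReal) - f x₀ ≤ ⨆ z : E, (((⟪ξ, z⟫ : ℝ) : EReal) - f z) :=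
      le_iSup (fun z => (((⟪ξ, z⟫ : ℝ) : EReal) - f z)) x₀
    refine le_trans ?_ key
    have hfx₀ : f x₀ = ((g x₀ : ℝ) : EReal) := hfg x₀ (hball hx₀mem)
    have hgle : g x₀ ≤ M := hmax hx₀mem
    subst hξ
    simp only [inner_zero_right, inner_zero_left, norm_zero, mul_zero]
    rw [hfx₀, ← EReal.coe_sub]
    norm_cast
    simp
    linarith
  · set z₀ : E := x₀ + (r * ‖ξ‖⁻¹) • ξ with hz₀
    have hz₀mem : z₀ ∈ closedBall x₀ r := by
      simp only [hz₀, mem_closedBall, dist_eq_norm]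
      have : x₀ + (r * ‖ξ‖⁻¹) • ξ - x₀ = (r * ‖ξ‖⁻¹) • ξ := by abel
      rw [this, norm_smul]
      have hn : ‖ξ‖ ≠ 0 := norm_ne_zero_iff.mpr hξ
      rw [Real.norm_eq_abs, abs_of_nonneg (by positivity)]
      field_simp
      exact le_rfl
    have hinner : (⟪ξ, z₀⟫ : ℝ) = ⟪x₀, ξ⟫ + r * ‖ξ‖ := by
      rw [hz₀, inner_add_right, real_inner_smul_right, real_inner_self_eq_norm_sq,
        real_inner_comm]
      have hn : ‖ξ‖ ≠ 0 := norm_ne_zero_iff.mpr hξ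
      field_simp
    have key : ((⟪ξ, z₀⟫ : ℝ) : EReal) - f z₀ ≤ ⨆ z : E, (((⟪ξ, z⟫ : ℝ) : EReal) - f z) :=
      le_iSup (fun z => (((⟪ξ, z⟫ : ℝ) : EReal) - f z)) z₀
    refine le_trans ?_ key
    have hfz₀ : f z₀ = ((g z₀ : ℝ) : EReal) := hfg z₀ (hball hz₀mem)
    have hgle : g z₀ ≤ M := hmax hz₀mem
    rw [hfz₀, ← EReal.coe_sub, hinner, ← EReal.coe_add, ← EReal.coe_add]
    exact_mod_cast (by linarith : ⟪x₀, ξ⟫ + r * ‖ξ‖ + -M ≤ ⟪x₀, ξ⟫ + r * ‖ξ‖ - g z₀)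
end

section
/- Let E be a finite-dimensional real inner product space, let U ⊆ E be an open convex set, and let F_j : U → ℝ (j ∈ ℕ) and F : U → ℝ be convex functions such that F_j → F locally uniformly on U as j → ∞. Suppose F is differentiable at ξ ∈ U, each F_j is differentiable at a point ξ_j ∈ U, and ξ_j → ξ. Then the gradients converge: ∇F_j(ξ_j) → ∇F(ξ). -/
open Filter Topology

lemma subgradient_ineq_aux {E : Type*} [NormedAddCommGroup E] [InnerProductSpace ℝ E]
    [CompleteSpace E]
    {U : Set E} {f : E → ℝ} (hf : ConvexOn ℝ U f) {x g : E} (hg : HasGradientAt f g x)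
    {y : E} (hx : x ∈ U) (hy : y ∈ U) :
    f x + (inner ℝ g (y - x) : ℝ) ≤ f y := by
  have hfd : HasFDerivAt f (InnerProductSpace.toDual ℝ E g) x :=
    hasGradientAt_iff_hasFDerivAt.mp hg
  set φ : ℝ → ℝ := fun t => f (x + t • (y - x)) with hφ
  have hderiv : HasDerivAt φ (inner ℝ g (y - x) : ℝ) 0 := by
    have hline : HasDerivAt (fun t : ℝ => x + t • (y - x)) (y - x) 0 := by
      simpa using ((hasDerivAt_id (0:ℝ)).smul_const (y - x)).const_add x
    have h2 : HasFDerivAt f (InnerProductSpace.toDual ℝ E g)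
        ((fun t : ℝ => x + t • (y - x)) 0) := by simpa using hfd
    exact (by simpa [InnerProductSpace.toDual_apply_apply] using h2.comp_hasDerivAt 0 hline :
      HasDerivAt (f ∘ fun t : ℝ => x + t • (y - x)) (inner ℝ g (y - x)) 0)
  have hslope : Tendsto (slope φ 0) (𝓝[>] 0) (𝓝 (inner ℝ g (y - x) : ℝ)) :=
    (hasDerivAt_iff_tendsto_slope.mp hderiv).mono_left
      (nhdsWithin_mono 0 fun t ht => ne_of_gt ht)
  have hle : (inner ℝ g (y - x) : ℝ) ≤ f y - f x := by
    refine le_of_tendsto hslope ?_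
    filter_upwards [Ioc_mem_nhdsGT_of_mem (Set.mem_Ico.mpr ⟨le_refl (0:ℝ), zero_lt_one⟩)]
      with t ht
    have ht0 : 0 < t := ht.1
    have hconv := hf.2 hx hy (show (0:ℝ) ≤ 1 - t by linarith [ht.2]) ht0.le
      (show (1-t)+t = 1 by ring)
    have hpt : (1 - t) • x + t • y = x + t • (y - x) := by
      simp [smul_sub, sub_smul]; abel
    rw [hpt] at hconv
    have : slope φ 0 t = (φ t - φ 0) / t := by simp [slope]; ring
    rw [this, div_le_iff₀ ht0]
    simp only [hφ, zero_smul, add_zero, smul_eq_mul] at hconv ⊢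
    nlinarith
  linarith

/-- If convex functions `F_j` converge locally uniformly on an open convex set
`U` to a convex function `F`, `F` is differentiable at `ξ ∈ U`, each `F_j` is differentiable
at `ξ_j ∈ U`, and `ξ_j → ξ`, then the gradients converge: `∇F_j(ξ_j) → ∇F(ξ)`. -/
theorem gradients_converge_of_convex_locally_uniform
    {E : Type*} [NormedAddCommGroup E] [InnerProductSpace ℝ E] [FiniteDimensional ℝ E]
    (U : Set E) (hUopen : IsOpen U) (hUconv : Convex ℝ U)
    (F : ℕ → E → ℝ) (Flim : E → ℝ)
    (hFconv : ∀ j, ConvexOn ℝ U (F j)) (hFlimconv : ConvexOn ℝ U Flim)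
    (hunif : TendstoLocallyUniformlyOn F Flim atTop U)
    (ξ : E) (hξ : ξ ∈ U) (G : E) (hG : HasGradientAt Flim G ξ)
    (ξs : ℕ → E) (hξs : ∀ j, ξs j ∈ U) (hξsto : Tendsto ξs atTop (𝓝 ξ))
    (G' : ℕ → E) (hG' : ∀ j, HasGradientAt (F j) (G' j) (ξs j)) :
    Tendsto G' atTop (𝓝 G) := by
  rw [Metric.tendsto_nhds]
  intro ε hε
  -- little-o bound for Flim at ξ
  have hfd : HasFDerivAt Flim (InnerProductSpace.toDual ℝ E G) ξ :=
    hasGradientAt_iff_hasFDerivAt.mp hG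
  have hlo : ∀ᶠ x' in 𝓝 ξ,
      ‖Flim x' - Flim ξ - (inner ℝ G (x' - ξ) : ℝ)‖ ≤ ε/8 * ‖x' - ξ‖ := by
    have := hfd.isLittleO.def (show (0:ℝ) < ε/8 by positivity)
    simpa [InnerProductSpace.toDual_apply_apply] using this
  obtain ⟨r1, hr1pos, hr1⟩ := Metric.eventually_nhds_iff_ball.mp hlo
  obtain ⟨r2, hr2pos, hr2⟩ := Metric.isOpen_iff.mp hUopen ξ hξ
  set r : ℝ := min r1 r2 / 4 with hrdef
  have hrpos : 0 < r := by positivity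
  have hrr1 : r < r1 := by
    have : min r1 r2 ≤ r1 := min_le_left _ _
    rw [hrdef]; linarith
  have hKU : Metric.closedBall ξ (2*r) ⊆ U := by
    refine (Metric.closedBall_subset_ball ?_).trans hr2
    have : min r1 r2 ≤ r2 := min_le_right _ _
    rw [hrdef]; linarith
  have hKcomp : IsCompact (Metric.closedBall ξ (2*r)) := isCompact_closedBall _ _
  -- uniform convergence on the compact ball
  have hTU : TendstoUniformlyOn F Flim atTop (Metric.closedBall ξ (2*r)) :=
    (tendstoLocallyUniformlyOn_iff_forall_isCompact hUopen).mp hunif _ hKU hKcomp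
  have h1 : ∀ᶠ j in atTop, ∀ x ∈ Metric.closedBall ξ (2*r),
      dist (Flim x) (F j x) < ε * r / 8 :=
    Metric.tendstoUniformlyOn_iff.mp hTU _ (by positivity)
  -- uniform continuity of Flim on the compact ball
  have hUC : UniformContinuousOn Flim (Metric.closedBall ξ (2*r)) :=
    hKcomp.uniformContinuousOn_of_continuous
      ((hFlimconv.continuousOn hUopen).mono hKU)
  obtain ⟨δ, hδpos, hδ⟩ := Metric.uniformContinuousOn_iff.mp hUC (ε * r / 8) (by positivity)
  have h2 : ∀ᶠ j in atTop, dist (ξs j) ξ < min δ r := by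
    refine Metric.tendsto_nhds.mp hξsto _ (lt_min hδpos hrpos)
  filter_upwards [h1, h2] with j hj1 hj2
  have hjδ : dist (ξs j) ξ < δ := lt_of_lt_of_le hj2 (min_le_left _ _)
  have hjr : dist (ξs j) ξ < r := lt_of_lt_of_le hj2 (min_le_right _ _)
  rw [dist_eq_norm]
  set w : E := G' j - G with hw
  rcases eq_or_ne w 0 with h0 | h0
  · rw [h0]; simpa using hε
  -- the test vector
  have hwn : 0 < ‖w‖ := norm_pos_iff.mpr h0
  set v : E := (r * ‖w‖⁻¹) • w with hv
  have hvnorm : ‖v‖ = r := by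
    rw [hv, norm_smul]
    rw [norm_mul, norm_inv, norm_norm, Real.norm_eq_abs, abs_of_pos hrpos]
    field_simp
  -- membership facts
  have hxjK : ξs j ∈ Metric.closedBall ξ (2*r) := by
    rw [Metric.mem_closedBall]; linarith
  have hxjvK : ξs j + v ∈ Metric.closedBall ξ (2*r) := by
    rw [Metric.mem_closedBall, dist_eq_norm]
    calc ‖ξs j + v - ξ‖ ≤ ‖ξs j - ξ‖ + ‖v‖ := by
          have : ξs j + v - ξ = (ξs j - ξ) + v := by abel
          rw [this]; exact norm_add_le _ _
      _ ≤ 2*r := by rw [hvnorm]; rw [dist_eq_norm] at hjr; linarith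
  have hxvK : ξ + v ∈ Metric.closedBall ξ (2*r) := by
    rw [Metric.mem_closedBall, dist_eq_norm]
    simpa [hvnorm] using by linarith
  -- subgradient inequality for F j at ξs j
  have hsub : F j (ξs j) + (inner ℝ (G' j) v : ℝ) ≤ F j (ξs j + v) := by
    have := subgradient_ineq_aux (hFconv j) (hG' j) (hξs j) (hKU hxjvK)
    simpa using this
  -- inner products
  have hinner : (inner ℝ w v : ℝ) = r * ‖w‖ := by
    rw [hv, real_inner_smul_right, real_inner_self_eq_norm_sq]
    field_simp
  have hsplit : (inner ℝ w v : ℝ) = (inner ℝ (G' j) v : ℝ) - (inner ℝ G v : ℝ) := by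
    rw [hw, inner_sub_left]
  -- little-o bound at ξ + v
  have hloc : ‖Flim (ξ + v) - Flim ξ - (inner ℝ G v : ℝ)‖ ≤ ε/8 * r := by
    have hm : ξ + v ∈ Metric.ball ξ r1 := by
      rw [Metric.mem_ball, dist_eq_norm]; simpa [hvnorm] using hrr1
    have := hr1 _ hm
    simpa [hvnorm] using this
  have hloc' : Flim (ξ + v) - Flim ξ - (inner ℝ G v : ℝ) ≤ ε/8 * r := by
    calc Flim (ξ + v) - Flim ξ - (inner ℝ G v : ℝ)
        ≤ ‖Flim (ξ + v) - Flim ξ - (inner ℝ G v : ℝ)‖ := le_abs_self _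
      _ ≤ ε/8 * r := hloc
  -- bounds from uniform convergence
  have hu1 : |Flim (ξs j + v) - F j (ξs j + v)| < ε * r / 8 := by
    have := hj1 _ hxjvK; rwa [Real.dist_eq] at this
  have hu2 : |Flim (ξs j) - F j (ξs j)| < ε * r / 8 := by
    have := hj1 _ hxjK; rwa [Real.dist_eq] at this
  -- bounds from uniform continuity
  have hc1 : |Flim (ξs j + v) - Flim (ξ + v)| < ε * r / 8 := by
    have hd : dist (ξs j + v) (ξ + v) < δ := by
      rw [dist_eq_norm]
      have : ξs j + v - (ξ + v) = ξs j - ξ := by abel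
      rw [this, ← dist_eq_norm]; exact hjδ
    have := hδ _ hxjvK _ hxvK hd
    rwa [Real.dist_eq] at this
  have hc2 : |Flim (ξs j) - Flim ξ| < ε * r / 8 := by
    have hξK : ξ ∈ Metric.closedBall ξ (2*r) := Metric.mem_closedBall_self (by linarith)
    have := hδ _ hxjK _ hξK hjδ
    rwa [Real.dist_eq] at this
  -- combine
  have hkey : r * ‖w‖ ≤ 5 * (ε * r / 8) := by
    have e1 := abs_lt.mp hu1
    have e2 := abs_lt.mp hu2
    have e3 := abs_lt.mp hc1
    have e4 := abs_lt.mp hc2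
    have hmain : r * ‖w‖ ≤ F j (ξs j + v) - F j (ξs j) - (inner ℝ G v : ℝ) := by
      rw [← hinner, hsplit]; linarith
    have : ε/8 * r = ε * r / 8 := by ring
    rw [this] at hloc'
    linarith
  have : ‖w‖ ≤ 5 * ε / 8 := by
    have := (mul_le_mul_iff_right₀ hrpos).mp (by linarith : r * ‖w‖ ≤ r * (5 * ε / 8))
    linarith
  linarith
end
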